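/- Let α ≥ 1, m = ⌈α⌉, and suppose f : [a,b] → ℝ is such that f^{(m-1)} is absolutely continuous on [a,b], f^{(k)}(b) = 0 for k = 1, ..., m-1, and D_{b-}^α f ∈ L¹([a,b]). Then |f(b) - (1/(b-a)) ∫_a^b f(u) du| ≤ (‖D_{b-}^α f‖_{L¹([a,b])} / Γ(α+1)) (b-a)^{α-1}. -/

import Mathlib

open MeasureTheory intervalIntegral

/-- `f ∈ AC^m([a,b])`: `f` is `(m-1)`-times continuously differentiable on `[a,b]` and
`f^{(m-1)}` is absolutely continuous on `[a,b]`, i.e. `f^{(m-1)}` is recovered by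
integrating its (a.e.) derivative `f^{(m)}`, which is integrable on `[a,b]`. -/
def IsACDeriv (m : ℕ) (a b : ℝ) (f : ℝ → ℝ) : Prop :=
  ContDiffOn ℝ (m - 1 : ℕ) f (Set.Icc a b) ∧
  IntervalIntegrable (iteratedDerivWithin m f (Set.Icc a b)) MeasureTheory.volume a b ∧
  ∀ x ∈ Set.Icc a b,
    iteratedDerivWithin (m - 1) f (Set.Icc a b) x
      = iteratedDerivWithin (m - 1) f (Set.Icc a b) a
        + ∫ t in a..x, iteratedDerivWithin m f (Set.Icc a b) t

/-- The right Caputo fractional derivative `D_{b-}^α f` of order `α > 0` of `f` on `[a,b]`: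
with `m = ⌈α⌉`, it is `((-1)^m / Γ(m-α)) ∫_x^b (t-x)^{m-α-1} f^{(m)}(t) dt` when `α ∉ ℕ`,
and `(-1)^m f^{(m)}(x)` when `α = m ∈ ℕ`. -/
noncomputable def rightCaputoDeriv (α a b : ℝ) (f : ℝ → ℝ) (x : ℝ) : ℝ :=
  if α = (⌈α⌉₊ : ℝ) then
    (-1 : ℝ) ^ (⌈α⌉₊ : ℕ) * iteratedDerivWithin ⌈α⌉₊ f (Set.Icc a b) x
  else
    ((-1 : ℝ) ^ (⌈α⌉₊ : ℕ) / Real.Gamma ((⌈α⌉₊ : ℝ) - α)) *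
      ∫ t in x..b, (t - x) ^ ((⌈α⌉₊ : ℝ) - α - 1) * iteratedDerivWithin ⌈α⌉₊ f (Set.Icc a b) t

/-!
Write `g = f^{(m)}` and `I^γ` for the right Riemann–Liouville integral. Taylor's formula with
integral remainder at `b`, where `f', …, f^{(m-1)}` vanish, reads `f x - f b = (-1)^m I^m g x`,
and the Caputo derivative is `D = (-1)^m I^{m-α} g`. The semigroup law `I^α I^β = I^{α+β}`
(Fubini and the Beta integral) therefore gives `f x - f b = I^α D x`. For `α ≥ 1` the kernel
`(t-x)^{α-1}` is at most `(b-x)^{α-1}`, so `|f b - f x| ≤ (b-x)^{α-1} ‖D‖₁ / Γ(α)`, and averaging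
over `x ∈ [a,b]` contributes the factor `(b-a)^{α-1} / α`.
-/

open Set
open ProbabilityTheory (beta)

theorem integral_rpow_mul_one_sub_rpow {u v : ℝ} (hu : 0 < u) (hv : 0 < v) :
    ∫ x in (0 : ℝ)..1, x ^ (u - 1) * (1 - x) ^ (v - 1) = beta u v := by
  apply Complex.ofReal_injective
  rw [beta, ← integral_ofReal]
  push_cast
  rw [← Complex.Gamma_ofReal, ← Complex.Gamma_ofReal, ← Complex.Gamma_ofReal, Complex.ofReal_add,
    ← Complex.betaIntegral_eq_Gamma_mul_div _ _ (by simpa) (by simpa), Complex.betaIntegral]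
  refine integral_congr fun x hx => ?_
  rw [uIcc_of_le zero_le_one] at hx
  rw [Complex.ofReal_cpow hx.1, Complex.ofReal_cpow (sub_nonneg.2 hx.2)]
  push_cast
  ring_nf

theorem integral_sub_rpow_mul_sub_rpow {u v x s : ℝ} (hu : 0 < u) (hv : 0 < v) (hxs : x < s) :
    ∫ t in x..s, (t - x) ^ (u - 1) * (s - t) ^ (v - 1) = beta u v * (s - x) ^ (u + v - 1) := by
  have hsx : 0 < s - x := sub_pos.2 hxs
  have hscale := integral_comp_mul_add (a := 0) (b := 1)
    (fun t => (t - x) ^ (u - 1) * (s - t) ^ (v - 1)) hsx.ne' x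
  simp only [mul_zero, zero_add, mul_one, sub_add_cancel, smul_eq_mul] at hscale
  rw [← mul_inv_cancel_left₀ hsx.ne' (∫ t in x..s, _), ← hscale,
    ← integral_rpow_mul_one_sub_rpow hu hv, ← intervalIntegral.integral_mul_const,
    ← intervalIntegral.integral_const_mul]
  refine integral_congr fun w hw => ?_
  rw [uIcc_of_le zero_le_one] at hw
  rw [show (s - x) * w + x - x = (s - x) * w by ring,
    show s - ((s - x) * w + x) = (s - x) * (1 - w) by ring,
    Real.mul_rpow hsx.le hw.1, Real.mul_rpow hsx.le (sub_nonneg.2 hw.2),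
    show u + v - 1 = 1 + (u - 1) + (v - 1) by ring, Real.rpow_add hsx, Real.rpow_add hsx,
    Real.rpow_one]
  ring

theorem intervalIntegrable_sub_rpow {ρ : ℝ} (hρ : -1 < ρ) (a b : ℝ) :
    IntervalIntegrable (fun t => (b - t) ^ ρ) volume a b := by
  simpa only [sub_sub_cancel, sub_zero] using
    (intervalIntegral.intervalIntegrable_rpow' (a := b - a) (b := 0) hρ).comp_sub_left b

theorem integral_sub_rpow {ρ : ℝ} (hρ : -1 < ρ) (a b : ℝ) :
    ∫ t in a..b, (b - t) ^ ρ = (b - a) ^ (ρ + 1) / (ρ + 1) := by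
  rw [integral_comp_sub_left (fun v => v ^ ρ) b, sub_self, integral_rpow (Or.inl hρ),
    Real.zero_rpow (by linarith), sub_zero]

theorem integral_indicator_Ioi {f : ℝ → ℝ} {a₁ a₂ a₃ : ℝ} (h : a₂ ∈ Icc a₁ a₃) :
    ∫ x in a₁..a₃, (Ioi a₂).indicator f x = ∫ x in a₂..a₃, f x := by
  rw [integral_of_le (h.1.trans h.2), integral_of_le h.2,
    MeasureTheory.integral_indicator measurableSet_Ioi, Measure.restrict_restrict measurableSet_Ioi,
    inter_comm, Ioc_inter_Ioi, sup_eq_right.2 h.1]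

theorem integral_indicator_Iio {f : ℝ → ℝ} {a₁ a₂ a₃ : ℝ} (h : a₂ ∈ Icc a₁ a₃) :
    ∫ x in a₁..a₃, (Iio a₂).indicator f x = ∫ x in a₁..a₂, f x := by
  have hinter : Iio a₂ ∩ Ioc a₁ a₃ = Ioo a₁ a₂ := by
    ext x
    simp only [mem_inter_iff, mem_Iio, mem_Ioc, mem_Ioo]
    exact ⟨fun hx => ⟨hx.2.1, hx.1⟩, fun hx => ⟨hx.2, hx.1, hx.2.le.trans h.2⟩⟩
  rw [integral_of_le (h.1.trans h.2), integral_of_le h.1,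
    MeasureTheory.integral_indicator measurableSet_Iio, Measure.restrict_restrict measurableSet_Iio,
    hinter, integral_Ioc_eq_integral_Ioo]

theorem abs_sub_average_le_of_abs_sub_le_rpow {F : ℝ → ℝ} {a b γ C : ℝ} (hab : a < b)
    (hγ : 0 < γ) (hF : IntervalIntegrable F volume a b)
    (hbound : ∀ x ∈ Icc a b, |F b - F x| ≤ C * (b - x) ^ (γ - 1)) :
    |F b - (1 / (b - a)) * ∫ u in a..b, F u| ≤ C * (b - a) ^ (γ - 1) / γ := by
  have hba : 0 < b - a := sub_pos.2 hab
  have hmean : F b - (1 / (b - a)) * ∫ u in a..b, F u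
      = (1 / (b - a)) * ∫ u in a..b, (F b - F u) := by
    rw [intervalIntegral.integral_sub intervalIntegrable_const hF, intervalIntegral.integral_const,
      smul_eq_mul]
    field_simp
  have hint : |∫ u in a..b, (F b - F u)| ≤ C * ((b - a) ^ γ / γ) := by
    rw [← sub_add_cancel γ 1, ← integral_sub_rpow (by linarith),
      ← intervalIntegral.integral_const_mul]
    exact norm_integral_le_of_norm_le (f := fun u => F b - F u) hab.le
      (ae_of_all _ fun x hx => hbound x (Ioc_subset_Icc_self hx))
      ((intervalIntegrable_sub_rpow (by linarith) a b).const_mul C)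
  rw [hmean, abs_mul, abs_of_pos (by positivity)]
  calc 1 / (b - a) * |∫ u in a..b, (F b - F u)| ≤ 1 / (b - a) * (C * ((b - a) ^ γ / γ)) :=
        mul_le_mul_of_nonneg_left hint (by positivity)
    _ = C * (b - a) ^ (γ - 1) / γ := by
        rw [Real.rpow_sub_one hba.ne']
        field_simp

/-- The right Riemann–Liouville integral `I_{b-}^γ g (x)`. -/
noncomputable def rightRLIntegral (γ b : ℝ) (g : ℝ → ℝ) (x : ℝ) : ℝ :=
  (Real.Gamma γ)⁻¹ * ∫ t in x..b, (t - x) ^ (γ - 1) * g t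

theorem rightRLIntegral_const_mul (γ b c : ℝ) (g : ℝ → ℝ) (x : ℝ) :
    rightRLIntegral γ b (fun t => c * g t) x = c * rightRLIntegral γ b g x := by
  simp only [rightRLIntegral, mul_left_comm _ c, intervalIntegral.integral_const_mul]

theorem rightRLIntegral_one (b : ℝ) (g : ℝ → ℝ) (x : ℝ) :
    rightRLIntegral 1 b g x = ∫ t in x..b, g t := by
  simp [rightRLIntegral]

theorem abs_rightRLIntegral_le {γ b x : ℝ} {h : ℝ → ℝ} (hγ : 1 ≤ γ) (hxb : x ≤ b)
    (hh : IntegrableOn h (Ioc x b)) :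
    |rightRLIntegral γ b h x| ≤ (Real.Gamma γ)⁻¹ * (b - x) ^ (γ - 1) * ∫ t in x..b, |h t| := by
  have hΓ := Real.Gamma_pos_of_pos (by linarith : 0 < γ)
  rw [rightRLIntegral, abs_mul, abs_of_pos (inv_pos.2 hΓ), mul_assoc,
    ← intervalIntegral.integral_const_mul]
  refine mul_le_mul_of_nonneg_left (norm_integral_le_of_norm_le
    (f := fun t => (t - x) ^ (γ - 1) * h t) hxb (ae_of_all _ fun t ht => ?_)
    (((intervalIntegrable_iff_integrableOn_Ioc_of_le hxb).2 hh).abs.const_mul _)) (inv_pos.2 hΓ).le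
  rw [Real.norm_eq_abs, abs_mul, abs_of_nonneg (Real.rpow_nonneg (sub_nonneg.2 ht.1.le) _)]
  exact mul_le_mul_of_nonneg_right
    (Real.rpow_le_rpow (sub_nonneg.2 ht.1.le) (by linarith [ht.2]) (by linarith)) (abs_nonneg _)

section Semigroup

variable {x b α β t s : ℝ} {g : ℝ → ℝ}

/-- The integrand of `rightRLIntegral α b (rightRLIntegral β b g) x` as a function of `(t, s)`,
extended by zero to `s ≤ t`. -/
noncomputable def rightRLKernel (x α β : ℝ) (g : ℝ → ℝ) (t s : ℝ) : ℝ :=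
  (Ioi t).indicator (fun s => (t - x) ^ (α - 1) * ((s - t) ^ (β - 1) * g s)) s

theorem rightRLKernel_eq_indicator_Iio (x α β : ℝ) (g : ℝ → ℝ) (s : ℝ) :
    (fun t => rightRLKernel x α β g t s)
      = (Iio s).indicator (fun t => (t - x) ^ (α - 1) * (s - t) ^ (β - 1) * g s) := by
  ext t
  simp only [rightRLKernel, indicator_apply, mem_Ioi, mem_Iio, mul_assoc]

theorem norm_rightRLKernel (hxt : x ≤ t) :
    ‖rightRLKernel x α β g t s‖ = rightRLKernel x α β (fun s => |g s|) t s := by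
  simp only [rightRLKernel, indicator_apply, mem_Ioi]
  split_ifs with hts
  · rw [Real.norm_eq_abs, abs_mul, abs_mul, abs_of_nonneg (Real.rpow_nonneg (sub_nonneg.2 hxt) _),
      abs_of_nonneg (Real.rpow_nonneg (sub_nonneg.2 hts.le) _)]
  · exact norm_zero

theorem integral_rightRLKernel (ht : t ∈ Icc x b) :
    ∫ s in x..b, rightRLKernel x α β g t s
      = (t - x) ^ (α - 1) * ∫ s in t..b, (s - t) ^ (β - 1) * g s := by
  simp only [rightRLKernel]
  rw [integral_indicator_Ioi ht, intervalIntegral.integral_const_mul]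

theorem integral_rightRLKernel_swap (hα : 0 < α) (hβ : 0 < β) (hs : s ∈ Ioc x b) :
    ∫ t in x..b, rightRLKernel x α β g t s = beta α β * (s - x) ^ (α + β - 1) * g s := by
  rw [rightRLKernel_eq_indicator_Iio, integral_indicator_Iio ⟨hs.1.le, hs.2⟩,
    intervalIntegral.integral_mul_const, integral_sub_rpow_mul_sub_rpow hα hβ hs.1]

theorem aestronglyMeasurable_rightRLKernel {μ ν : Measure ℝ} [SFinite ν]
    (hg : AEStronglyMeasurable g ν) :
    AEStronglyMeasurable (Function.uncurry (rightRLKernel x α β g)) (μ.prod ν) := by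
  have hind : Function.uncurry (rightRLKernel x α β g) = {p : ℝ × ℝ | p.1 < p.2}.indicator
      (fun p => (p.1 - x) ^ (α - 1) * ((p.2 - p.1) ^ (β - 1) * g p.2)) := by
    ext p
    simp only [Function.uncurry, rightRLKernel, indicator_apply, mem_Ioi, mem_ofPred_eq]
  rw [hind]
  refine AEStronglyMeasurable.indicator ?_ (measurableSet_lt measurable_fst measurable_snd)
  exact (Measurable.aestronglyMeasurable (by fun_prop)).mul
    ((Measurable.aestronglyMeasurable (by fun_prop)).mul hg.comp_snd)

theorem integrableOn_rightRLKernel (hα : 1 ≤ α) (hβ : 0 < β) (hg : IntegrableOn g (Ioc x b)) :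
    IntegrableOn (Function.uncurry (rightRLKernel x α β g)) (Ioc x b ×ˢ Ioc x b) := by
  have hcont : Continuous fun t : ℝ => (t - x) ^ (α - 1) :=
    (Real.continuous_rpow_const (by linarith)).comp (continuous_sub_right x)
  rw [IntegrableOn, Measure.volume_eq_prod, ← Measure.prod_restrict]
  refine (integrable_prod_iff' (aestronglyMeasurable_rightRLKernel hg.aestronglyMeasurable)).2
    ⟨?_, ?_⟩
  · filter_upwards [ae_restrict_mem measurableSet_Ioc] with s hs
    simp only [Function.uncurry_apply_pair]
    rw [rightRLKernel_eq_indicator_Iio, integrable_indicator_iff measurableSet_Iio, IntegrableOn,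
      Measure.restrict_restrict measurableSet_Iio]
    refine IntegrableOn.mono_set ?_ (fun t ht => ⟨ht.2.1.le, ht.1.le⟩ : Iio s ∩ Ioc x b ⊆ Icc x s)
    have hsing : IntegrableOn (fun t => (s - t) ^ (β - 1)) (Icc x s) :=
      (Iff.mp intervalIntegrable_iff' (intervalIntegrable_sub_rpow (by linarith) x s)).mono_set
        Icc_subset_uIcc
    exact (hsing.continuousOn_mul hcont.continuousOn isCompact_Icc).mul_const _
  · -- the inner integral of the norm is computed exactly, by the Beta integral applied to `|g|`
    have hsection : ∀ s ∈ Ioc x b, ∫ t in Ioc x b, ‖rightRLKernel x α β g t s‖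
        = beta α β * (s - x) ^ (α + β - 1) * |g s| := by
      intro s hs
      rw [setIntegral_congr_fun measurableSet_Ioc (fun t ht => norm_rightRLKernel ht.1.le),
        ← integral_of_le (hs.1.le.trans hs.2), integral_rightRLKernel_swap (by linarith) hβ hs]
    refine IntegrableOn.congr_fun ?_ (fun s hs => (hsection s hs).symm) measurableSet_Ioc
    have hpow : Continuous fun s : ℝ => beta α β * (s - x) ^ (α + β - 1) :=
      continuous_const.mul
        ((Real.continuous_rpow_const (by linarith)).comp (continuous_sub_right x))
    exact ((Iff.mpr integrableOn_Icc_iff_integrableOn_Ioc hg.abs).continuousOn_mul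
      hpow.continuousOn isCompact_Icc).mono_set Ioc_subset_Icc_self

theorem rightRLIntegral_rightRLIntegral (hα : 1 ≤ α) (hβ : 0 < β) (hxb : x ≤ b)
    (hg : IntegrableOn g (Ioc x b)) :
    rightRLIntegral α b (rightRLIntegral β b g) x = rightRLIntegral (α + β) b g x := by
  have hα0 : 0 < α := by linarith
  have hinner : ∫ t in x..b, (t - x) ^ (α - 1) * rightRLIntegral β b g t
      = (Real.Gamma β)⁻¹ * ∫ t in x..b, ∫ s in x..b, rightRLKernel x α β g t s := by
    rw [← intervalIntegral.integral_const_mul]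
    refine integral_congr fun t ht => ?_
    rw [uIcc_of_le hxb] at ht
    simp only [integral_rightRLKernel ht, rightRLIntegral]
    ring
  have hswap : ∫ t in x..b, ∫ s in x..b, rightRLKernel x α β g t s
      = beta α β * ∫ s in x..b, (s - x) ^ (α + β - 1) * g s := by
    rw [intervalIntegral_intervalIntegral_swap
      (by simpa only [uIoc_of_le hxb] using integrableOn_rightRLKernel hα hβ hg),
      ← intervalIntegral.integral_const_mul]
    refine integral_congr_ae (ae_of_all _ fun s hs => ?_)
    rw [uIoc_of_le hxb] at hs
    rw [integral_rightRLKernel_swap hα0 hβ hs, mul_assoc]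
  rw [rightRLIntegral, rightRLIntegral, hinner, hswap, beta]
  have := Real.Gamma_pos_of_pos hα0
  have := Real.Gamma_pos_of_pos hβ
  have := Real.Gamma_pos_of_pos (add_pos hα0 hβ)
  field_simp

end Semigroup

namespace IsACDeriv

variable {m : ℕ} {a b x : ℝ} {f : ℝ → ℝ}

theorem sub_eq_integral_iteratedDerivWithin (hf : IsACDeriv m a b f) (hab : a < b) {k : ℕ}
    (hk : k < m) (hx : x ∈ Icc a b) :
    iteratedDerivWithin k f (Icc a b) b - iteratedDerivWithin k f (Icc a b) x
      = ∫ t in x..b, iteratedDerivWithin (k + 1) f (Icc a b) t := by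
  obtain ⟨hcd, hint, hac⟩ := hf
  rcases Nat.lt_or_ge (k + 1) m with hk1 | hk1
  · have huniq := uniqueDiffOn_Icc hab
    have hsub : Icc x b ⊆ Icc a b := Icc_subset_Icc_left hx.1
    have hcont (j : ℕ) (hj : j ≤ m - 1) :
        ContinuousOn (iteratedDerivWithin j f (Icc a b)) (Icc x b) :=
      (hcd.continuousOn_iteratedDerivWithin (by norm_cast) huniq).mono hsub
    refine (integral_eq_sub_of_hasDeriv_right_of_le hx.2 (hcont k (by omega)) (fun t ht => ?_)
      ((hcont (k + 1) (by omega)).intervalIntegrable_of_Icc hx.2)).symm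
    have hderiv : HasDerivWithinAt (iteratedDerivWithin k f (Icc a b))
        (iteratedDerivWithin (k + 1) f (Icc a b) t) (Icc a b) t := by
      rw [iteratedDerivWithin_succ]
      exact (hcd.differentiableOn_iteratedDerivWithin (by norm_cast; omega) huniq t
        ⟨hx.1.trans ht.1.le, ht.2.le⟩).hasDerivWithinAt
    exact (hderiv.hasDerivAt (Icc_mem_nhds (hx.1.trans_lt ht.1) ht.2)).hasDerivWithinAt
  · obtain rfl : k = m - 1 := by omega
    rw [Nat.sub_add_cancel (by omega), hac x hx, hac b (right_mem_Icc.2 hab.le),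
      ← integral_interval_sub_left hint
        (hint.mono_set (uIcc_subset_uIcc_left (mem_uIcc_of_le hx.1 hx.2)))]
    ring

theorem iteratedDerivWithin_eq_add_rightRLIntegral (hf : IsACDeriv m a b f) (hab : a < b)
    (hfb : ∀ k : ℕ, 1 ≤ k → k < m → iteratedDerivWithin k f (Icc a b) b = 0) {n : ℕ}
    (hn : n < m) (hx : x ∈ Icc a b) :
    iteratedDerivWithin (m - 1 - n) f (Icc a b) x = iteratedDerivWithin (m - 1 - n) f (Icc a b) b
      + (-1) ^ (n + 1) * rightRLIntegral (n + 1) b (iteratedDerivWithin m f (Icc a b)) x := by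
  induction n generalizing x with
  | zero =>
    have h := hf.sub_eq_integral_iteratedDerivWithin hab (k := m - 1) (by omega) hx
    rw [Nat.sub_add_cancel (by omega)] at h
    simp only [Nat.sub_zero, CharP.cast_eq_zero, zero_add, rightRLIntegral_one, ← h]
    ring
  | succ n ih =>
    have h := hf.sub_eq_integral_iteratedDerivWithin hab (k := m - 1 - (n + 1)) (by omega) hx
    rw [show m - 1 - (n + 1) + 1 = m - 1 - n by omega] at h
    have hint : ∫ t in x..b, iteratedDerivWithin (m - 1 - n) f (Icc a b) t
        = (-1) ^ (n + 1)
          * rightRLIntegral (1 + (n + 1)) b (iteratedDerivWithin m f (Icc a b)) x := by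
      rw [← rightRLIntegral_rightRLIntegral le_rfl (by positivity) hx.2
        (hf.2.1.1.mono_set (Ioc_subset_Ioc_left hx.1)), rightRLIntegral_one,
        ← intervalIntegral.integral_const_mul]
      refine integral_congr fun t ht => ?_
      rw [uIcc_of_le hx.2] at ht
      rw [ih (by omega) (Icc_subset_Icc_left hx.1 ht), hfb _ (by omega) (by omega), zero_add]
    rw [← sub_eq_iff_eq_add', ← neg_sub, h, hint,
      show ((n + 1 : ℕ) : ℝ) + 1 = 1 + (n + 1) by push_cast; ring]
    ring

theorem sub_eq_rightRLIntegral (hf : IsACDeriv m a b f) (hab : a < b)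
    (hfb : ∀ k : ℕ, 1 ≤ k → k < m → iteratedDerivWithin k f (Icc a b) b = 0) (hm : 1 ≤ m)
    (hx : x ∈ Icc a b) :
    f x - f b = (-1) ^ m * rightRLIntegral m b (iteratedDerivWithin m f (Icc a b)) x := by
  have h := hf.iteratedDerivWithin_eq_add_rightRLIntegral hab hfb (n := m - 1) (by omega) hx
  rw [Nat.sub_self, iteratedDerivWithin_zero, Nat.sub_add_cancel hm, Nat.cast_sub hm, Nat.cast_one,
    sub_add_cancel] at h
  rw [h]
  ring

end IsACDeriv

theorem rightRLIntegral_rightCaputoDeriv {α a b x : ℝ} {f : ℝ → ℝ} (hα : 1 ≤ α) (hxb : x ≤ b)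
    (hg : IntegrableOn (iteratedDerivWithin ⌈α⌉₊ f (Icc a b)) (Ioc x b)) :
    rightRLIntegral α b (rightCaputoDeriv α a b f) x
      = (-1) ^ ⌈α⌉₊ * rightRLIntegral ⌈α⌉₊ b (iteratedDerivWithin ⌈α⌉₊ f (Icc a b)) x := by
  by_cases hint : α = ⌈α⌉₊
  · have hD : rightCaputoDeriv α a b f
        = fun t => (-1) ^ ⌈α⌉₊ * iteratedDerivWithin ⌈α⌉₊ f (Icc a b) t := by
      ext t
      rw [rightCaputoDeriv, if_pos hint]
    rw [hD, rightRLIntegral_const_mul, ← hint]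
  · have hD : rightCaputoDeriv α a b f = fun t =>
        (-1) ^ ⌈α⌉₊ * rightRLIntegral (⌈α⌉₊ - α) b (iteratedDerivWithin ⌈α⌉₊ f (Icc a b)) t := by
      ext t
      simp only [rightCaputoDeriv, if_neg hint, rightRLIntegral, sub_sub]
      ring
    rw [hD, rightRLIntegral_const_mul, rightRLIntegral_rightRLIntegral hα
      (sub_pos.2 ((Nat.le_ceil α).lt_of_ne hint)) hxb hg, add_sub_cancel]

/-- **Right Caputo fractional Ostrowski inequality, `L¹` case.** -/
theorem rightCaputo_ostrowski_L1 (α : ℝ) (hα : 1 ≤ α) (a b : ℝ) (hab : a < b) (f : ℝ → ℝ)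
    (hf : IsACDeriv ⌈α⌉₊ a b f)
    (hfb : ∀ k : ℕ, 1 ≤ k → k < ⌈α⌉₊ → iteratedDerivWithin k f (Set.Icc a b) b = 0)
    (hD : IntervalIntegrable (rightCaputoDeriv α a b f) MeasureTheory.volume a b) :
    |f b - (1 / (b - a)) * ∫ u in a..b, f u|
      ≤ (∫ t in a..b, |rightCaputoDeriv α a b f t|) / Real.Gamma (α + 1)
          * (b - a) ^ (α - 1) := by
  have hα0 : 0 < α := by linarith
  set D := rightCaputoDeriv α a b f
  have hbound : ∀ x ∈ Icc a b,
      |f b - f x| ≤ ((Real.Gamma α)⁻¹ * ∫ t in a..b, |D t|) * (b - x) ^ (α - 1) := by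
    intro x hx
    have hIoc : Ioc x b ⊆ Ioc a b := Ioc_subset_Ioc_left hx.1
    calc |f b - f x| = |rightRLIntegral α b D x| := by
          rw [rightRLIntegral_rightCaputoDeriv hα hx.2 (hf.2.1.1.mono_set hIoc),
            ← hf.sub_eq_rightRLIntegral hab hfb (Nat.one_le_ceil_iff.2 hα0) hx, abs_sub_comm]
      _ ≤ (Real.Gamma α)⁻¹ * (b - x) ^ (α - 1) * ∫ t in x..b, |D t| :=
          abs_rightRLIntegral_le hα hx.2 (hD.1.mono_set hIoc)
      _ ≤ (Real.Gamma α)⁻¹ * (b - x) ^ (α - 1) * ∫ t in a..b, |D t| := by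
          refine mul_le_mul_of_nonneg_left ?_ (mul_nonneg
            (inv_nonneg.2 (Real.Gamma_pos_of_pos hα0).le) (Real.rpow_nonneg (sub_nonneg.2 hx.2) _))
          exact integral_mono_interval hx.1 hx.2 le_rfl (ae_of_all _ fun t => abs_nonneg _) hD.abs
      _ = _ := by ring
  calc |f b - (1 / (b - a)) * ∫ u in a..b, f u|
      ≤ ((Real.Gamma α)⁻¹ * ∫ t in a..b, |D t|) * (b - a) ^ (α - 1) / α :=
        abs_sub_average_le_of_abs_sub_le_rpow hab hα0
          (hf.1.continuousOn.intervalIntegrable_of_Icc hab.le) hbound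
    _ = _ := by
        rw [Real.Gamma_add_one hα0.ne']
        field_simp
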